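/- arXiv:2002.11321 — 7 statements merged into one kernel-verified Lean document; each statement's English description precedes it below -/
import Mathlib

section
/- Unique decoding of Reed–Solomon codes with errors and erasures (sufficiency of the condition n − b ≥ 2c + d, used as the correctness guarantee of the decoder DEC): let b, c, d, n be natural numbers with n ≥ b + 2c + d, and let f and g be polynomials over F of degree less than b. Suppose there exist a set E ⊆ Fin n with |E| ≤ d (the erased positions) and a function r : Fin n → F (the received word) such that the number of indices i ∉ E with f(α i) ≠ r(i) is at most c, and the number of indices i ∉ E with g(α i) ≠ r(i) is at most c. Then f = g. -/
/-!
The codewords of `f` and `g` can only differ at an erased position or at an error of one of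
them, hence in at most `d + 2c ≤ n - b` positions. So `f - g`, of degree `< b`, vanishes at
`b` distinct points and is zero.
-/

open Polynomial

theorem Set.ncard_setOf_ne_le_of_errors {ι β : Type*} [Finite ι] (E : Set ι) (u v r : ι → β) :
    {i | u i ≠ v i}.ncard ≤
      E.ncard + {i | i ∉ E ∧ u i ≠ r i}.ncard + {i | i ∉ E ∧ v i ≠ r i}.ncard := by
  have hsub : {i | u i ≠ v i} ⊆ E ∪ {i | i ∉ E ∧ u i ≠ r i} ∪ {i | i ∉ E ∧ v i ≠ r i} := by
    intro i (hi : u i ≠ v i)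
    by_cases hiE : i ∈ E
    · exact Or.inl (Or.inl hiE)
    by_cases hu : u i = r i
    · exact Or.inr ⟨hiE, hu ▸ Ne.symm hi⟩
    · exact Or.inl (Or.inr ⟨hiE, hu⟩)
  calc {i | u i ≠ v i}.ncard
      ≤ (E ∪ {i | i ∉ E ∧ u i ≠ r i} ∪ {i | i ∉ E ∧ v i ≠ r i}).ncard :=
        Set.ncard_le_ncard hsub
    _ ≤ (E ∪ {i | i ∉ E ∧ u i ≠ r i}).ncard + {i | i ∉ E ∧ v i ≠ r i}.ncard :=
        Set.ncard_union_le _ _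
    _ ≤ _ := by gcongr; exact Set.ncard_union_le _ _

/-- The minimum distance of the Reed–Solomon code is more than `n - b`. -/
theorem Polynomial.eq_of_degree_lt_of_ncard_eval_ne_le {ι F : Type*} [Fintype ι] [Field F]
    {α : ι → F} (hα : Function.Injective α) {b : ℕ} {f g : F[X]}
    (hf : f.degree < b) (hg : g.degree < b)
    (hfg : {i | f.eval (α i) ≠ g.eval (α i)}.ncard + b ≤ Fintype.card ι) : f = g := by
  classical
  have hcard : b ≤ {i | f.eval (α i) = g.eval (α i)}.ncard := by
    have hsplit := Set.ncard_add_ncard_compl {i | f.eval (α i) = g.eval (α i)}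
    rw [Nat.card_eq_fintype_card] at hsplit
    change _ + {i | f.eval (α i) ≠ g.eval (α i)}.ncard = _ at hsplit
    omega
  rw [Set.ncard_eq_toFinset_card'] at hcard
  refine eq_of_degrees_lt_of_eval_index_eq _ hα.injOn
    (hf.trans_le (by exact_mod_cast hcard)) (hg.trans_le (by exact_mod_cast hcard))
    fun i hi => by simpa using hi

/-- Unique decoding of (n,b) Reed–Solomon codes with at most `c` errors and `d` erasures,
assuming `n ≥ b + 2c + d`.  Messages are polynomials of degree `< b`, evaluated at the
`n` distinct points `α 0, …, α (n-1)`.  If a received word `r` with erased positions `E`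
(`|E| ≤ d`) disagrees with the codeword of `f` in at most `c` non-erased positions, and
likewise for `g`, then `f = g`. -/
theorem rs_unique_decoding
    {F : Type*} [Field F] {n b c d : ℕ}
    (α : Fin n → F) (hα : Function.Injective α)
    (hn : b + 2 * c + d ≤ n)
    (f g : Polynomial F)
    (hf : f.degree < (b : WithBot ℕ)) (hg : g.degree < (b : WithBot ℕ))
    (E : Set (Fin n)) (hE : E.ncard ≤ d)
    (r : Fin n → F)
    (hfr : {i : Fin n | i ∉ E ∧ f.eval (α i) ≠ r i}.ncard ≤ c)
    (hgr : {i : Fin n | i ∉ E ∧ g.eval (α i) ≠ r i}.ncard ≤ c) :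
    f = g := by
  refine eq_of_degree_lt_of_ncard_eval_ne_le hα hf hg ?_
  have hdist := Set.ncard_setOf_ne_le_of_errors E (fun i => f.eval (α i))
    (fun i => g.eval (α i)) r
  rw [Fintype.card_fin]
  omega
end

section
/- Necessity of the condition n − b ≥ 2c + d for decoding Reed–Solomon codes with c errors and d erasures: let b, c, d, n be natural numbers with b ≥ 1 and n < b + 2c + d. Then there exist polynomials f ≠ g over F, each of degree less than b, a set E ⊆ Fin n with |E| ≤ d, and a function r : Fin n → F such that the number of indices i ∉ E with f(α i) ≠ r(i) is at most c and the number of indices i ∉ E with g(α i) ≠ r(i) is at most c; that is, the received word r with erasures E is consistent with two distinct messages. -/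
/-!
Take the nodal polynomial `g` of `min n (b - 1)` of the evaluation points: it has degree `< b`
and its codeword differs from that of `0` in at most `n - (b - 1) ≤ 2c + d` positions.
Any two words differing in at most `2c + d` positions are confused by a received word:
erase `d` of the disagreeing positions, copy one word on `c` of the rest and the other word
everywhere else.
-/

open Polynomial

namespace Set

theorem exists_subset_ncard_le_ncard_sdiff_le {α : Type*} {s : Set α} {a b : ℕ}
    (h : s.ncard ≤ a + b) (hs : s.Finite := by toFinite_tac) :
    ∃ t ⊆ s, t.ncard ≤ a ∧ (s \ t).ncard ≤ b := by
  obtain ⟨t, hts, ht⟩ := exists_subset_card_eq (min_le_right a s.ncard)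
  refine ⟨t, hts, ht ▸ min_le_left _ _, ?_⟩
  rw [ncard_sdiff hts (hs.subset hts), ht]
  omega

end Set

theorem exists_erasures_and_word_close_to_both {ι β : Type*} [Finite ι] {c d : ℕ}
    (u v : ι → β) (h : {i | u i ≠ v i}.ncard ≤ 2 * c + d) :
    ∃ E : Set ι, E.ncard ≤ d ∧ ∃ r : ι → β,
      {i | i ∉ E ∧ u i ≠ r i}.ncard ≤ c ∧ {i | i ∉ E ∧ v i ≠ r i}.ncard ≤ c := by
  classical
  set D := {i | u i ≠ v i}
  obtain ⟨E, -, hE, hDE⟩ := D.exists_subset_ncard_le_ncard_sdiff_le (a := d) (b := 2 * c)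
    (by omega)
  obtain ⟨Q, -, hQc, hRc⟩ := (D \ E).exists_subset_ncard_le_ncard_sdiff_le (a := c) (b := c)
    (by omega)
  refine ⟨E, hE, Q.piecewise v u, (Set.ncard_le_ncard ?_).trans hQc,
    (Set.ncard_le_ncard ?_).trans hRc⟩
  · intro i ⟨_, hi⟩
    by_contra hiQ
    exact hi (Set.piecewise_eq_of_notMem _ _ _ hiQ).symm
  · intro i ⟨hiE, hi⟩
    have hiQ : i ∉ Q := fun hiQ ↦ hi (Set.piecewise_eq_of_mem _ _ _ hiQ).symm
    rw [Set.piecewise_eq_of_notMem _ _ _ hiQ] at hi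
    exact ⟨⟨Ne.symm hi, hiE⟩, hiQ⟩

theorem rs_decoding_necessity_general
    {F : Type*} [Field F] {n b c d : ℕ}
    (α : Fin n → F)
    (hb : 1 ≤ b) (hn : n < b + 2 * c + d) :
    ∃ f g : Polynomial F, f ≠ g ∧
      f.degree < (b : WithBot ℕ) ∧ g.degree < (b : WithBot ℕ) ∧
      ∃ E : Set (Fin n), E.ncard ≤ d ∧
        ∃ r : Fin n → F,
          {i : Fin n | i ∉ E ∧ f.eval (α i) ≠ r i}.ncard ≤ c ∧
          {i : Fin n | i ∉ E ∧ g.eval (α i) ≠ r i}.ncard ≤ c := by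
  obtain ⟨S, -, hS⟩ := Finset.exists_subset_card_eq (s := (Finset.univ : Finset (Fin n)))
    (n := min n (b - 1)) (by simp)
  have hdisagree : {i | (Lagrange.nodal S α).eval (α i) ≠ (0 : F[X]).eval (α i)} ⊆ ↑Sᶜ :=
    fun i hi ↦ Finset.mem_compl.2 fun hiS ↦ hi (by simpa using Lagrange.eval_nodal_at_node hiS)
  have hcard : {i | (Lagrange.nodal S α).eval (α i) ≠ (0 : F[X]).eval (α i)}.ncard
      ≤ 2 * c + d := by
    refine (Set.ncard_le_ncard hdisagree).trans ?_
    rw [Set.ncard_coe_finset, Finset.card_compl, Fintype.card_fin, hS]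
    omega
  refine ⟨_, 0, Lagrange.nodal_ne_zero, ?_, by simp,
    exists_erasures_and_word_close_to_both _ _ hcard⟩
  rw [Lagrange.degree_nodal, hS, Nat.cast_lt]
  omega

/-- Necessity of `n ≥ b + 2c + d` for decoding (n,b) Reed–Solomon codes with `c` errors and
`d` erasures: if `b ≥ 1` and `n < b + 2c + d`, then there exist two distinct messages
(polynomials of degree `< b`), an erasure set `E` with `|E| ≤ d`, and a received word `r`
consistent (up to `c` errors outside `E`) with both messages. -/
theorem rs_decoding_necessity
    {F : Type*} [Field F] {n b c d : ℕ}
    (α : Fin n → F) (hα : Function.Injective α)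
    (hb : 1 ≤ b) (hn : n < b + 2 * c + d) :
    ∃ f g : Polynomial F, f ≠ g ∧
      f.degree < (b : WithBot ℕ) ∧ g.degree < (b : WithBot ℕ) ∧
      ∃ E : Set (Fin n), E.ncard ≤ d ∧
        ∃ r : Fin n → F,
          {i : Fin n | i ∉ E ∧ f.eval (α i) ≠ r i}.ncard ≤ c ∧
          {i : Fin n | i ∉ E ∧ g.eval (α i) ≠ r i}.ncard ≤ c :=
  rs_decoding_necessity_general α hb hn
end

section
/- Exclusion bound in the STAR protocol (core counting argument of the paper's Lemma on obtaining a nonempty set E): let A ⊆ V be an independent set of H, let M be a maximum matching of H with support N, and let T = {v ∈ V \ N : there exists an edge {x,y} ∈ M such that v is adjacent to x and v is adjacent to y in H}. Then |A ∩ (N ∪ T)| ≤ |V \ A|; that is, for every A-vertex excluded from V \ (N ∪ T) there is a distinct non-A-vertex also excluded. -/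
/-- A matching of a simple graph `H`: a finite set of edges of `H` that are pairwise
vertex-disjoint. -/
def IsMatching {V : Type*} (H : SimpleGraph V) (M : Finset (Sym2 V)) : Prop :=
  (↑M : Set (Sym2 V)) ⊆ H.edgeSet ∧
    ∀ e ∈ M, ∀ e' ∈ M, e ≠ e' → ∀ v : V, v ∈ e → v ∉ e'

/-- A maximum matching: a matching such that no matching of `H` has strictly more edges. -/
def IsMaximumMatching {V : Type*} (H : SimpleGraph V) (M : Finset (Sym2 V)) : Prop :=
  IsMatching H M ∧ ∀ M' : Finset (Sym2 V), IsMatching H M' → M'.card ≤ M.card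

/-- The support of a matching: the set of vertices covered by its edges. -/
def matchingSupport {V : Type*} (M : Finset (Sym2 V)) : Set V :=
  {v | ∃ e ∈ M, v ∈ e}

/-- The set `T` of the STAR protocol: vertices uncovered by the matching `M` that are
adjacent (in `H`) to both endpoints of some edge of `M`. -/
def starT {V : Type*} (H : SimpleGraph V) (M : Finset (Sym2 V)) : Set V :=
  {v | v ∉ matchingSupport M ∧ ∃ x y : V, s(x, y) ∈ M ∧ H.Adj v x ∧ H.Adj v y}

/-!
Send each `A`-vertex of `N ∪ T` to a neighbour across a matching edge `xy`: a vertex `a ∈ N` goes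
to its partner, and a vertex `a ∈ T` to an endpoint `x` of an edge `xy` it sees on both sides.
The image avoids `A` because `A` is independent. Two vertices sent to the same `x` use the same
edge `xy`; if one of them is `y`, the other is adjacent to it, and if both are uncovered, then
`a x y b` is an augmenting path, contradicting maximality.
-/

section

variable {V : Type*} {H : SimpleGraph V} {M : Finset (Sym2 V)}

lemma notMem_of_notMem_matchingSupport {v : V} {e : Sym2 V} (hv : v ∉ matchingSupport M)
    (he : v ∈ e) : e ∉ M :=
  fun heM => hv ⟨e, heM, he⟩

lemma matchingSupport_mono {M' : Finset (Sym2 V)} (h : M' ⊆ M) :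
    matchingSupport M' ⊆ matchingSupport M :=
  fun _ ⟨e, he, hv⟩ => ⟨e, h he, hv⟩

lemma mem_matchingSupport_insert [DecidableEq V] {e : Sym2 V} {v : V} :
    v ∈ matchingSupport (insert e M) ↔ v ∈ e ∨ v ∈ matchingSupport M := by
  simp [matchingSupport]

namespace IsMatching

lemma eq_of_mem (hM : IsMatching H M) {e e' : Sym2 V} (he : e ∈ M) (he' : e' ∈ M) {v : V}
    (hv : v ∈ e) (hv' : v ∈ e') : e = e' :=
  by_contra fun h => hM.2 e he e' he' h v hv hv'

lemma mono {M' : Finset (Sym2 V)} (hM : IsMatching H M) (h : M' ⊆ M) : IsMatching H M' :=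
  ⟨fun _ he => hM.1 (h he), fun e he e' he' => hM.2 e (h he) e' (h he')⟩

lemma notMem_matchingSupport_erase [DecidableEq V] (hM : IsMatching H M) {e : Sym2 V}
    (he : e ∈ M) {v : V} (hv : v ∈ e) : v ∉ matchingSupport (M.erase e) := by
  rintro ⟨e', he', hv'⟩
  exact (Finset.mem_erase.1 he').1 (hM.eq_of_mem (Finset.mem_of_mem_erase he') he hv' hv)

protected lemma insert [DecidableEq V] (hM : IsMatching H M) {u v : V} (huv : H.Adj u v)
    (hu : u ∉ matchingSupport M) (hv : v ∉ matchingSupport M) :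
    IsMatching H (insert s(u, v) M) := by
  have hfree : ∀ w ∈ s(u, v), ∀ e ∈ M, w ∉ e := by
    intro w hw e he hwe
    rcases Sym2.mem_iff.1 hw with rfl | rfl
    exacts [hu ⟨e, he, hwe⟩, hv ⟨e, he, hwe⟩]
  refine ⟨?_, ?_⟩
  · rw [Finset.coe_insert, Set.insert_subset_iff]
    exact ⟨huv, hM.1⟩
  · intro e he e' he' hne w hwe hwe'
    rcases Finset.mem_insert.1 he with rfl | he <;> rcases Finset.mem_insert.1 he' with rfl | he'
    · exact hne rfl
    · exact hfree w hwe e' he' hwe'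
    · exact hfree w hwe' e he hwe
    · exact hM.2 e he e' he' hne w hwe hwe'

end IsMatching

lemma IsMaximumMatching.no_augmenting_path_length_three (hM : IsMaximumMatching H M)
    {v x y w : V} (hxy : s(x, y) ∈ M) (hv : v ∉ matchingSupport M) (hw : w ∉ matchingSupport M)
    (hvw : v ≠ w) (hvx : H.Adj v x) (hwy : H.Adj w y) : False := by
  classical
  set M₀ := M.erase s(x, y)
  have hx₀ := hM.1.notMem_matchingSupport_erase hxy (Sym2.mem_mk_left x y)
  have hy₀ := hM.1.notMem_matchingSupport_erase hxy (Sym2.mem_mk_right x y)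
  have hv₀ : v ∉ matchingSupport M₀ := fun h => hv (matchingSupport_mono (M.erase_subset _) h)
  have hw₀ : w ∉ matchingSupport M₀ := fun h => hw (matchingSupport_mono (M.erase_subset _) h)
  have hx : x ∈ matchingSupport M := ⟨_, hxy, Sym2.mem_mk_left x y⟩
  have hy : y ∈ matchingSupport M := ⟨_, hxy, Sym2.mem_mk_right x y⟩
  have hM₁ : IsMatching H (insert s(w, y) M₀) := (hM.1.mono (M.erase_subset _)).insert hwy hw₀ hy₀
  have hv₁ : v ∉ matchingSupport (insert s(w, y) M₀) := by
    rw [mem_matchingSupport_insert, Sym2.mem_iff, not_or, not_or]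
    exact ⟨⟨hvw, fun h => hv (h ▸ hy)⟩, hv₀⟩
  have hx₁ : x ∉ matchingSupport (insert s(w, y) M₀) := by
    rw [mem_matchingSupport_insert, Sym2.mem_iff, not_or, not_or]
    exact ⟨⟨fun h => hw (h ▸ hx), (hM.1.1 hxy).ne⟩, hx₀⟩
  have hcard : (insert s(v, x) (insert s(w, y) M₀)).card = M.card + 1 := by
    rw [Finset.card_insert_of_notMem (notMem_of_notMem_matchingSupport hv₁ (Sym2.mem_mk_left v x)),
      Finset.card_insert_of_notMem (notMem_of_notMem_matchingSupport hw₀ (Sym2.mem_mk_left w y)),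
      Finset.card_erase_of_mem hxy]
    have := Finset.card_pos.2 ⟨_, hxy⟩
    omega
  have := hM.2 _ (hM₁.insert hvx hv₁ hx₁)
  omega

lemma IsMatching.exists_edge_of_mem_matchingSupport_union_starT (hM : IsMatching H M) {a : V}
    (ha : a ∈ matchingSupport M ∪ starT H M) :
    ∃ x y, s(x, y) ∈ M ∧ H.Adj a x ∧ (a = y ∨ a ∉ matchingSupport M ∧ H.Adj a y) := by
  rcases ha with ⟨e, he, hae⟩ | ⟨haN, x, y, hxy, hax, hay⟩
  · induction e using Sym2.ind with
    | h p q =>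
      rcases Sym2.mem_iff.1 hae with rfl | rfl
      · exact ⟨q, a, Sym2.eq_swap ▸ he, hM.1 he, Or.inl rfl⟩
      · exact ⟨p, a, he, (hM.1 he).symm, Or.inl rfl⟩
  · exact ⟨x, y, hxy, hax, Or.inr ⟨haN, hay⟩⟩

lemma IsMaximumMatching.eq_of_indep_of_same_endpoint {A : Set V}
    (hA : ∀ a ∈ A, ∀ b ∈ A, a ≠ b → ¬ H.Adj a b) (hM : IsMaximumMatching H M)
    {a b x y y' : V} (ha : a ∈ A) (hb : b ∈ A) (hxy : s(x, y) ∈ M) (hxy' : s(x, y') ∈ M)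
    (hax : H.Adj a x) (hay : a = y ∨ a ∉ matchingSupport M ∧ H.Adj a y)
    (hby : b = y' ∨ b ∉ matchingSupport M ∧ H.Adj b y') : a = b := by
  obtain rfl : y = y' := Sym2.congr_right.1
    (hM.1.eq_of_mem hxy hxy' (Sym2.mem_mk_left x y) (Sym2.mem_mk_left x y'))
  by_contra hab
  rcases hay with rfl | ⟨haN, hay⟩ <;> rcases hby with rfl | ⟨hbN, hby⟩
  · exact hab rfl
  · exact hA b hb a ha (Ne.symm hab) hby
  · exact hA a ha b hb hab hay
  · exact hM.no_augmenting_path_length_three hxy haN hbN hab hax hby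

end

/-- Exclusion bound in the STAR protocol: if `A` is an independent set of `H`, `M` is a
maximum matching of `H` with support `N`, and `T` is the set of uncovered vertices adjacent
to both endpoints of some matching edge, then `|A ∩ (N ∪ T)| ≤ |V \ A|`. -/
theorem star_exclusion_bound {V : Type*} [Fintype V]
    (H : SimpleGraph V) (A : Set V)
    (hA : ∀ a ∈ A, ∀ b ∈ A, a ≠ b → ¬ H.Adj a b)
    (M : Finset (Sym2 V)) (hM : IsMaximumMatching H M) :
    (A ∩ (matchingSupport M ∪ starT H M)).ncard ≤ (Aᶜ).ncard := by
  choose! f g hedge hadj hserved using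
    fun a (ha : a ∈ A ∩ (matchingSupport M ∪ starT H M)) =>
      hM.1.exists_edge_of_mem_matchingSupport_union_starT ha.2
  refine Set.ncard_le_ncard_of_injOn f
    (fun a ha hfa => hA a ha.1 (f a) hfa (hadj a ha).ne (hadj a ha)) ?_
  intro a ha b hb hab
  exact hM.eq_of_indep_of_same_endpoint hA ha.1 hb.1 (hedge a ha) (hab ▸ hedge b hb) (hadj a ha)
    (hserved a ha) (hserved b hb)
end

section
/- Honest parties in the set C of an (n,t)-star hold the same message: let (C, D) be an (n,t)-star, i.e., C ⊆ D ⊆ Fin n with |C| ≥ n − 2t and |D| ≥ n − t such that adj i j holds for every i ∈ C and j ∈ D with i ≠ j. Then for all honest parties i, j ∈ C (i.e., i, j ∈ C \ B), f_i = f_j. -/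
/-!
Fix honest `i, j ∈ C`. Every honest `k ∈ D` other than `i` is adjacent to `i`, so
`f i (x k) = f k (x k)`, and likewise for `j`; hence `f i` and `f j` agree at all points `x k`
with `k ∈ D \ B`. There are at least `n - 2t ≥ t + 1` such points, and two polynomials of
degree at most `t` agreeing at `t + 1` distinct points are equal.
-/

open Polynomial Finset

theorem Polynomial.eq_of_degrees_le_of_eval_index_eq {R ι : Type*} [CommRing R] [IsDomain R]
    {v : ι → R} {s : Finset ι} {f g : R[X]} {t : ℕ} (hvs : Set.InjOn v s)
    (hf : f.degree ≤ t) (hg : g.degree ≤ t) (hts : t < #s)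
    (eval_fg : ∀ i ∈ s, f.eval (v i) = g.eval (v i)) : f = g :=
  eq_of_degree_sub_lt_of_eval_index_eq s hvs
    ((degree_sub_le f g).trans_lt ((max_le hf hg).trans_lt (WithBot.coe_lt_coe.mpr hts)))
    eval_fg

theorem eval_eq_of_star_center {ι F : Type*} [Semiring F] {f : ι → F[X]} {x : ι → F}
    {B D : Set ι} {adj : ι → ι → Prop}
    (hagree : ∀ i ∉ B, ∀ j ∉ B, adj i j →
      (f i).eval (x j) = (f j).eval (x j) ∧ (f i).eval (x i) = (f j).eval (x i))
    {i : ι} (hiB : i ∉ B) (hi : ∀ k ∈ D, i ≠ k → adj i k) {k : ι} (hk : k ∈ D \ B) :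
    (f i).eval (x k) = (f k).eval (x k) := by
  obtain rfl | hik := eq_or_ne i k
  · rfl
  · exact (hagree i hiB k hk.2 (hi k hk.1 hik)).1

theorem star_C_honest_same_message_general
    {F : Type*} [Field F] {n t : ℕ} (hn : 3 * t + 1 ≤ n)
    (B : Set (Fin n)) (hB : B.ncard ≤ t)
    (x : Fin n → F) (hx : Function.Injective x)
    (f : Fin n → Polynomial F) (hdeg : ∀ i, (f i).degree ≤ (t : WithBot ℕ))
    (adj : Fin n → Fin n → Prop)
    (hagree : ∀ i ∉ B, ∀ j ∉ B, adj i j →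
      (f i).eval (x j) = (f j).eval (x j) ∧ (f i).eval (x i) = (f j).eval (x i))
    (C D : Set (Fin n)) (hD : n - t ≤ D.ncard)
    (hstar : ∀ i ∈ C, ∀ j ∈ D, i ≠ j → adj i j) :
    ∀ i ∈ C, i ∉ B → ∀ j ∈ C, j ∉ B → f i = f j := by
  classical
  intro i hiC hiB j hjC hjB
  have hhonest : t < #(D \ B).toFinset := by
    have := Set.le_ncard_sdiff B D
    rw [Set.ncard_eq_toFinset_card' (D \ B)] at this
    omega
  refine Polynomial.eq_of_degrees_le_of_eval_index_eq hx.injOn (hdeg i) (hdeg j) hhonest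
    fun k hk => ?_
  rw [Set.mem_toFinset] at hk
  exact (eval_eq_of_star_center hagree hiB (hstar i hiC) hk).trans
    (eval_eq_of_star_center hagree hjB (hstar j hjC) hk).symm

/-- Honest parties in the set `C` of an `(n,t)`-star hold the same message.
Parties are indexed by `Fin n` with `n ≥ 3t + 1`; `B` (with `|B| ≤ t`) is the set of
Byzantine parties.  Each party `i` holds a polynomial `f i` of degree at most `t` over a
field `F` (its message, encoded as the `(n, t+1)` Reed–Solomon codeword at the distinct
points `x 0, …, x (n-1)`).  The agreement graph `adj` is symmetric and irreflexive, and
whenever two honest parties `i, j` are adjacent, their codewords agree in positions `i`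
and `j`.  If `(C, D)` is an `(n,t)`-star (`C ⊆ D ⊆ Fin n`, `|C| ≥ n - 2t`, `|D| ≥ n - t`,
every pair in `C × D` adjacent), then all honest parties in `C` hold the same polynomial. -/
theorem star_C_honest_same_message
    {F : Type*} [Field F] {n t : ℕ} (hn : 3 * t + 1 ≤ n)
    (B : Set (Fin n)) (hB : B.ncard ≤ t)
    (x : Fin n → F) (hx : Function.Injective x)
    (f : Fin n → Polynomial F) (hdeg : ∀ i, (f i).degree ≤ (t : WithBot ℕ))
    (adj : Fin n → Fin n → Prop)
    (hsymm : ∀ i j, adj i j → adj j i) (hirr : ∀ i, ¬ adj i i)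
    (hagree : ∀ i ∉ B, ∀ j ∉ B, adj i j →
      (f i).eval (x j) = (f j).eval (x j) ∧ (f i).eval (x i) = (f j).eval (x i))
    (C D : Set (Fin n)) (hCD : C ⊆ D)
    (hC : n - 2 * t ≤ C.ncard) (hD : n - t ≤ D.ncard)
    (hstar : ∀ i ∈ C, ∀ j ∈ D, i ≠ j → adj i j) :
    ∀ i ∈ C, i ∉ B → ∀ j ∈ C, j ∉ B → f i = f j :=
  star_C_honest_same_message_general hn B hB x hx f hdeg adj hagree C D hD hstar
end

section
/- Every honest party in the set 𝓕 holds the correct piece of the codeword: let (C, D) be an (n,t)-star, i.e., C ⊆ D ⊆ Fin n with |C| ≥ n − 2t and |D| ≥ n − t such that adj i j holds for every i ∈ C and j ∈ D with i ≠ j. Then for every honest party j such that the set {k ∈ C : adj j k or k = j} has at least t + 1 elements, and every honest party i ∈ C, it holds that f_j(x j) = f_i(x j); that is, the j-th piece held by j agrees with the codeword of the common message of the honest parties in C. -/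
/-!
Any two honest parties `a, b ∈ C` are adjacent to every party of `D`, so at each honest
`m ∈ D` both of their pieces equal `m`'s own piece `f m (x m)`. Since `|D| ≥ n - t` and
`n ≥ 3t + 1`, there are at least `t + 1` honest parties in `D`, and two polynomials of
degree at most `t` agreeing at `t + 1` distinct points coincide: all honest parties of `C`
hold the same polynomial. An honest `j` with `t + 1` neighbours in `C` (itself included)
has an honest one, `k`, among them, and the edge `j — k` gives `f j (x j) = f k (x j)`.
-/

open Polynomial

theorem Polynomial.eq_of_degree_le_of_eval_eq_of_lt_ncard {R ι : Type*} [CommRing R]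
    [IsDomain R] {f g : R[X]} {t : ℕ} {S : Set ι} {v : ι → R} (hv : Set.InjOn v S)
    (hS : t < S.ncard) (hf : f.degree ≤ t) (hg : g.degree ≤ t)
    (hfg : ∀ i ∈ S, f.eval (v i) = g.eval (v i)) : f = g := by
  have hfin : S.Finite := Set.finite_of_ncard_pos (by omega)
  rw [Set.ncard_eq_toFinset_card S hfin] at hS
  have hlt : (t : WithBot ℕ) < hfin.toFinset.card := by exact_mod_cast hS
  exact eq_of_degrees_lt_of_eval_index_eq hfin.toFinset (by simpa using hv)
    (hf.trans_lt hlt) (hg.trans_lt hlt) (by simpa using hfg)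

section Star

variable {ι F : Type*} [Field F] {B C D : Set ι} {x : ι → F} {f : ι → F[X]}
  {adj : ι → ι → Prop}

theorem eval_eq_eval_self_of_star
    (hagree : ∀ i ∉ B, ∀ j ∉ B, adj i j →
      (f i).eval (x j) = (f j).eval (x j) ∧ (f i).eval (x i) = (f j).eval (x i))
    (hstar : ∀ i ∈ C, ∀ j ∈ D, i ≠ j → adj i j)
    {a m : ι} (ha : a ∈ C) (haB : a ∉ B) (hm : m ∈ D) (hmB : m ∉ B) :
    (f a).eval (x m) = (f m).eval (x m) := by
  rcases eq_or_ne a m with rfl | ham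
  · rfl
  · exact (hagree a haB m hmB (hstar a ha m hm ham)).1

theorem eq_of_mem_star {t : ℕ} (hx : Function.Injective x)
    (hdeg : ∀ i, (f i).degree ≤ (t : WithBot ℕ))
    (hagree : ∀ i ∉ B, ∀ j ∉ B, adj i j →
      (f i).eval (x j) = (f j).eval (x j) ∧ (f i).eval (x i) = (f j).eval (x i))
    (hstar : ∀ i ∈ C, ∀ j ∈ D, i ≠ j → adj i j) (hDB : t < (D \ B).ncard)
    {a b : ι} (ha : a ∈ C) (haB : a ∉ B) (hb : b ∈ C) (hbB : b ∉ B) : f a = f b :=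
  eq_of_degree_le_of_eval_eq_of_lt_ncard hx.injOn hDB (hdeg a) (hdeg b)
    fun _ ⟨hm, hmB⟩ => (eval_eq_eval_self_of_star hagree hstar ha haB hm hmB).trans
      (eval_eq_eval_self_of_star hagree hstar hb hbB hm hmB).symm

end Star

theorem F_honest_correct_piece_general
    {F : Type*} [Field F] {n t : ℕ} (hn : 3 * t + 1 ≤ n)
    (B : Set (Fin n)) (hB : B.ncard ≤ t)
    (x : Fin n → F) (hx : Function.Injective x)
    (f : Fin n → Polynomial F) (hdeg : ∀ i, (f i).degree ≤ (t : WithBot ℕ))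
    (adj : Fin n → Fin n → Prop)
    (hagree : ∀ i ∉ B, ∀ j ∉ B, adj i j →
      (f i).eval (x j) = (f j).eval (x j) ∧ (f i).eval (x i) = (f j).eval (x i))
    (C D : Set (Fin n)) (hD : n - t ≤ D.ncard)
    (hstar : ∀ i ∈ C, ∀ j ∈ D, i ≠ j → adj i j) :
    ∀ j ∉ B, t + 1 ≤ {k | k ∈ C ∧ (adj j k ∨ k = j)}.ncard →
      ∀ i ∈ C, i ∉ B → (f j).eval (x j) = (f i).eval (x j) := by
  intro j hjB hS i hi hiB
  have hDB : t < (D \ B).ncard := by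
    have := Set.le_ncard_sdiff B D
    omega
  obtain ⟨k, ⟨hk, hjk⟩, hkB⟩ :=
    Set.exists_mem_notMem_of_ncard_lt_ncard (s := B) (t := {k | k ∈ C ∧ (adj j k ∨ k = j)})
      (by omega)
  rw [eq_of_mem_star hx hdeg hagree hstar hDB hi hiB hk hkB]
  rcases hjk with hadj | rfl
  · exact (hagree j hjB k hkB hadj).2
  · rfl

/-- Every honest party in the set `𝓕` holds the correct piece of the codeword.
Parties are indexed by `Fin n` with `n ≥ 3t + 1`; `B` (with `|B| ≤ t`) is the set of
Byzantine parties.  Each party `i` holds a polynomial `f i` of degree at most `t` over a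
field `F`, encoded as the `(n, t+1)` Reed–Solomon codeword at the distinct points
`x 0, …, x (n-1)`.  The agreement graph `adj` is symmetric and irreflexive, and whenever
two honest parties `i, j` are adjacent, their codewords agree in positions `i` and `j`.
Let `(C, D)` be an `(n,t)`-star.  Then every honest party `j` having at least `t + 1`
neighbors in `C` (counting itself) holds the correct `j`-th piece: `f j (x j) = f i (x j)`
for every honest `i ∈ C`. -/
theorem F_honest_correct_piece
    {F : Type*} [Field F] {n t : ℕ} (hn : 3 * t + 1 ≤ n)
    (B : Set (Fin n)) (hB : B.ncard ≤ t)
    (x : Fin n → F) (hx : Function.Injective x)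
    (f : Fin n → Polynomial F) (hdeg : ∀ i, (f i).degree ≤ (t : WithBot ℕ))
    (adj : Fin n → Fin n → Prop)
    (hsymm : ∀ i j, adj i j → adj j i) (hirr : ∀ i, ¬ adj i i)
    (hagree : ∀ i ∉ B, ∀ j ∉ B, adj i j →
      (f i).eval (x j) = (f j).eval (x j) ∧ (f i).eval (x i) = (f j).eval (x i))
    (C D : Set (Fin n)) (hCD : C ⊆ D)
    (hC : n - 2 * t ≤ C.ncard) (hD : n - t ≤ D.ncard)
    (hstar : ∀ i ∈ C, ∀ j ∈ D, i ≠ j → adj i j) :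
    ∀ j ∉ B, t + 1 ≤ {k | k ∈ C ∧ (adj j k ∨ k = j)}.ncard →
      ∀ i ∈ C, i ∉ B → (f j).eval (x j) = (f i).eval (x j) :=
  F_honest_correct_piece_general hn B hB x hx f hdeg adj hagree C D hD hstar
end

section
/- Honest parties in the set 𝓔 derived from an (n,t)-star hold the same message: let (C, D) be an (n,t)-star, i.e., C ⊆ D ⊆ Fin n with |C| ≥ n − 2t and |D| ≥ n − t such that adj i j holds for every i ∈ C and j ∈ D with i ≠ j. Define 𝓕 = {j : the set {k ∈ C : adj j k or k = j} has at least t + 1 elements} and 𝓔 = {j : the set {k ∈ 𝓕 : adj j k or k = j} has at least 2t + 1 elements} (a party counts as its own neighbor in these definitions). Then for all honest parties i, j ∈ 𝓔 (i.e., i, j ∈ 𝓔 \ B), f_i = f_j; moreover this common polynomial equals the common polynomial f_k of every honest k ∈ C. -/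
/-!
Honest parties of `C` agree with each honest party of `D` at that party's point, so any two of
them agree on the `≥ n - 2t ≥ t + 1` honest points of `D` and coincide. An honest `j ∈ 𝓕` has an
honest neighbour in `C`, hence `f j` takes the common value at `x j`. An honest `i ∈ 𝓔` has at least
`t + 1` honest neighbours `j ∈ 𝓕` and agrees with each of them at `x j`, so `f i` is the common
polynomial as well.
-/

/-- The set `𝓕` derived from the set `C`: parties having at least `t + 1` neighbors in `C`
in the agreement graph (a party counts as its own neighbor). -/
def Fset {n : ℕ} (t : ℕ) (adj : Fin n → Fin n → Prop) (C : Set (Fin n)) : Set (Fin n) :=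
  {j | t + 1 ≤ {k | k ∈ C ∧ (adj j k ∨ k = j)}.ncard}

/-- The set `𝓔` derived from `𝓕`: parties having at least `2t + 1` neighbors in `𝓕`
in the agreement graph (a party counts as its own neighbor). -/
def Eset {n : ℕ} (t : ℕ) (adj : Fin n → Fin n → Prop) (C : Set (Fin n)) : Set (Fin n) :=
  {j | 2 * t + 1 ≤ {k | k ∈ Fset t adj C ∧ (adj j k ∨ k = j)}.ncard}

open Polynomial

theorem Polynomial.eq_of_degree_le_of_lt_ncard_of_eval_eq {R ι : Type*} [CommRing R] [IsDomain R]
    {v : ι → R} {S : Set ι} (hv : S.InjOn v) {p q : R[X]} {t : ℕ}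
    (hp : p.degree ≤ t) (hq : q.degree ≤ t) (hS : t < S.ncard)
    (h : ∀ i ∈ S, p.eval (v i) = q.eval (v i)) : p = q := by
  have hfin : S.Finite := Set.finite_of_ncard_pos (by omega)
  refine eq_of_degree_sub_lt_of_eval_index_eq hfin.toFinset (by simpa using hv) ?_
    (by simpa using h)
  rw [← Set.ncard_eq_toFinset_card S hfin]
  exact (degree_sub_le p q).trans_lt ((max_le hp hq).trans_lt (by exact_mod_cast hS))

section Agreement

variable {F : Type*} [Field F] {n t : ℕ} {B : Set (Fin n)} {x : Fin n → F} {f : Fin n → F[X]}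
  {adj : Fin n → Fin n → Prop}

variable (B x f adj) in
def AgreeAlongEdges : Prop :=
  ∀ i ∉ B, ∀ j ∉ B, adj i j →
    (f i).eval (x j) = (f j).eval (x j) ∧ (f i).eval (x i) = (f j).eval (x i)

theorem AgreeAlongEdges.eval_eq (hagree : AgreeAlongEdges B x f adj) {i j : Fin n}
    (hi : i ∉ B) (hj : j ∉ B) (hij : adj i j ∨ j = i) :
    (f i).eval (x j) = (f j).eval (x j) ∧ (f i).eval (x i) = (f j).eval (x i) := by
  rcases hij with hij | rfl
  · exact hagree i hi j hj hij
  · exact ⟨rfl, rfl⟩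

/-- At least `t + 1` of the `2t + 1` neighbours are honest, and `f i` agrees with `g` at each of
their points. -/
theorem AgreeAlongEdges.eq_of_eval_self_eq (hagree : AgreeAlongEdges B x f adj)
    (hx : Function.Injective x) (hB : B.ncard ≤ t) {i : Fin n} (hi : i ∉ B) {g : F[X]}
    (hfi : (f i).degree ≤ t) (hg : g.degree ≤ t) {S : Set (Fin n)} (hS : 2 * t + 1 ≤ S.ncard)
    (hadj : ∀ j ∈ S, adj i j ∨ j = i) (hval : ∀ j ∈ S, j ∉ B → (f j).eval (x j) = g.eval (x j)) :
    f i = g := by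
  have hhonest : t < (S \ B).ncard := by
    have := Set.ncard_le_ncard_sdiff_add_ncard S B
    omega
  refine eq_of_degree_le_of_lt_ncard_of_eval_eq hx.injOn hfi hg hhonest ?_
  rintro j ⟨hjS, hjB⟩
  rw [(hagree.eval_eq hi hjB (hadj j hjS)).1, hval j hjS hjB]

variable {C D : Set (Fin n)}

theorem AgreeAlongEdges.eq_of_mem_star (hagree : AgreeAlongEdges B x f adj)
    (hx : Function.Injective x) (hdeg : ∀ i, (f i).degree ≤ t) (hn : 3 * t + 1 ≤ n)
    (hB : B.ncard ≤ t) (hD : n - t ≤ D.ncard) (hstar : ∀ i ∈ C, ∀ j ∈ D, i ≠ j → adj i j)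
    {i k : Fin n} (hiC : i ∈ C) (hi : i ∉ B) (hkC : k ∈ C) (hk : k ∉ B) : f i = f k := by
  have hneighbour : ∀ {c}, c ∈ C → ∀ j ∈ D, adj c j ∨ j = c := fun {c} hc j hj => by
    by_cases hcj : c = j
    · exact Or.inr hcj.symm
    · exact Or.inl (hstar _ hc j hj hcj)
  refine hagree.eq_of_eval_self_eq hx hB hi (hdeg i) (hdeg k) (by omega) (hneighbour hiC) ?_
  intro j hjD hj
  exact (hagree.eval_eq hk hj (hneighbour hkC j hjD)).1.symm

theorem AgreeAlongEdges.eval_self_eq_of_mem_Fset (hagree : AgreeAlongEdges B x f adj)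
    (hx : Function.Injective x) (hdeg : ∀ i, (f i).degree ≤ t) (hn : 3 * t + 1 ≤ n)
    (hB : B.ncard ≤ t) (hD : n - t ≤ D.ncard) (hstar : ∀ i ∈ C, ∀ j ∈ D, i ≠ j → adj i j)
    {j k : Fin n} (hjF : j ∈ Fset t adj C) (hj : j ∉ B) (hkC : k ∈ C) (hk : k ∉ B) :
    (f j).eval (x j) = (f k).eval (x j) := by
  obtain ⟨c, ⟨hcC, hjc⟩, hc⟩ := Set.exists_mem_notMem_of_ncard_lt_ncard (hB.trans_lt hjF)
  rw [(hagree.eval_eq hj hc hjc).2, hagree.eq_of_mem_star hx hdeg hn hB hD hstar hcC hc hkC hk]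

theorem AgreeAlongEdges.eq_of_mem_Eset (hagree : AgreeAlongEdges B x f adj)
    (hx : Function.Injective x) (hdeg : ∀ i, (f i).degree ≤ t) (hn : 3 * t + 1 ≤ n)
    (hB : B.ncard ≤ t) (hD : n - t ≤ D.ncard) (hstar : ∀ i ∈ C, ∀ j ∈ D, i ≠ j → adj i j)
    {i k : Fin n} (hiE : i ∈ Eset t adj C) (hi : i ∉ B) (hkC : k ∈ C) (hk : k ∉ B) :
    f i = f k :=
  hagree.eq_of_eval_self_eq hx hB hi (hdeg i) (hdeg k) hiE (fun _ hj => hj.2)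
    fun _ hj hjB => hagree.eval_self_eq_of_mem_Fset hx hdeg hn hB hD hstar hj.1 hjB hkC hk

end Agreement

theorem E_honest_same_message_general
    {F : Type*} [Field F] {n t : ℕ} (hn : 3 * t + 1 ≤ n)
    (B : Set (Fin n)) (hB : B.ncard ≤ t)
    (x : Fin n → F) (hx : Function.Injective x)
    (f : Fin n → Polynomial F) (hdeg : ∀ i, (f i).degree ≤ (t : WithBot ℕ))
    (adj : Fin n → Fin n → Prop)
    (hagree : ∀ i ∉ B, ∀ j ∉ B, adj i j →
      (f i).eval (x j) = (f j).eval (x j) ∧ (f i).eval (x i) = (f j).eval (x i))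
    (C D : Set (Fin n))
    (hC : n - 2 * t ≤ C.ncard) (hD : n - t ≤ D.ncard)
    (hstar : ∀ i ∈ C, ∀ j ∈ D, i ≠ j → adj i j) :
    (∀ i ∈ Eset t adj C, i ∉ B → ∀ j ∈ Eset t adj C, j ∉ B → f i = f j) ∧
      (∀ i ∈ Eset t adj C, i ∉ B → ∀ k ∈ C, k ∉ B → f i = f k) := by
  have hE : ∀ i ∈ Eset t adj C, i ∉ B → ∀ k ∈ C, k ∉ B → f i = f k :=
    fun _ hiE hi _ hkC hk =>
      AgreeAlongEdges.eq_of_mem_Eset hagree hx hdeg hn hB hD hstar hiE hi hkC hk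
  obtain ⟨k, hkC, hk⟩ := Set.exists_mem_notMem_of_ncard_lt_ncard (s := B) (t := C) (by omega)
  exact ⟨fun i hiE hi j hjE hj => (hE i hiE hi k hkC hk).trans (hE j hjE hj k hkC hk).symm, hE⟩

/-- Honest parties in the set `𝓔` derived from an `(n,t)`-star hold the same message.
Parties are indexed by `Fin n` with `n ≥ 3t + 1`; `B` (with `|B| ≤ t`) is the set of
Byzantine parties.  Each party `i` holds a polynomial `f i` of degree at most `t` over a
field `F`, encoded as the `(n, t+1)` Reed–Solomon codeword at the distinct points
`x 0, …, x (n-1)`.  The agreement graph `adj` is symmetric and irreflexive, and whenever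
two honest parties `i, j` are adjacent, their codewords agree in positions `i` and `j`.
Let `(C, D)` be an `(n,t)`-star.  Then all honest parties in `𝓔` hold the same polynomial,
and it equals the common polynomial of every honest party in `C`. -/
theorem E_honest_same_message
    {F : Type*} [Field F] {n t : ℕ} (hn : 3 * t + 1 ≤ n)
    (B : Set (Fin n)) (hB : B.ncard ≤ t)
    (x : Fin n → F) (hx : Function.Injective x)
    (f : Fin n → Polynomial F) (hdeg : ∀ i, (f i).degree ≤ (t : WithBot ℕ))
    (adj : Fin n → Fin n → Prop)
    (hsymm : ∀ i j, adj i j → adj j i) (hirr : ∀ i, ¬ adj i i)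
    (hagree : ∀ i ∉ B, ∀ j ∉ B, adj i j →
      (f i).eval (x j) = (f j).eval (x j) ∧ (f i).eval (x i) = (f j).eval (x i))
    (C D : Set (Fin n)) (hCD : C ⊆ D)
    (hC : n - 2 * t ≤ C.ncard) (hD : n - t ≤ D.ncard)
    (hstar : ∀ i ∈ C, ∀ j ∈ D, i ≠ j → adj i j) :
    (∀ i ∈ Eset t adj C, i ∉ B → ∀ j ∈ Eset t adj C, j ∉ B → f i = f j) ∧
      (∀ i ∈ Eset t adj C, i ∉ B → ∀ k ∈ C, k ∉ B → f i = f k) :=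
  E_honest_same_message_general hn B hB x hx f hdeg adj hagree C D hC hD hstar
end

section
/- If the honest parties form a clique in the agreement graph and C contains at least t + 1 honest parties, then the derived sets 𝓕 and 𝓔 contain all honest parties: let adj be a symmetric irreflexive relation on Fin n with n ≥ 3t + 1, let B ⊆ Fin n with |B| ≤ t, suppose adj i j holds for all distinct i, j ∉ B, and let C ⊆ Fin n satisfy |C \ B| ≥ t + 1. Define 𝓕 = {j : the set {k ∈ C : adj j k or k = j} has at least t + 1 elements} and 𝓔 = {j : the set {k ∈ 𝓕 : adj j k or k = j} has at least 2t + 1 elements} (a party counts as its own neighbor in these definitions). Then every party outside B belongs to 𝓕 and to 𝓔; in particular |𝓕| ≥ 2t + 1 and |𝓔| ≥ 2t + 1, so 𝓔 is nonempty. -/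
/-! Every honest party is adjacent to all other honest parties, so its closed neighbourhood in
`C` contains the `t + 1` honest members of `C`, and then its closed neighbourhood in `𝓕`
contains all `n - t ≥ 2t + 1` honest parties. -/

section

variable {n : ℕ} {adj : Fin n → Fin n → Prop}

theorem ncard_le_ncard_closedNbhd {S T : Set (Fin n)} {j : Fin n} (hST : S ⊆ T)
    (hadj : ∀ k ∈ S, k ≠ j → adj j k) :
    S.ncard ≤ {k | k ∈ T ∧ (adj j k ∨ k = j)}.ncard :=
  Set.ncard_le_ncard (fun k hk => ⟨hST hk, (em (k = j)).elim Or.inr (Or.inl ∘ hadj k hk)⟩)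

theorem mem_Fset_of_subset {t : ℕ} {C S : Set (Fin n)} {j : Fin n} (hSC : S ⊆ C)
    (hS : t + 1 ≤ S.ncard) (hadj : ∀ k ∈ S, k ≠ j → adj j k) : j ∈ Fset t adj C :=
  hS.trans (ncard_le_ncard_closedNbhd hSC hadj)

theorem mem_Eset_of_subset {t : ℕ} {C S : Set (Fin n)} {j : Fin n} (hSF : S ⊆ Fset t adj C)
    (hS : 2 * t + 1 ≤ S.ncard) (hadj : ∀ k ∈ S, k ≠ j → adj j k) : j ∈ Eset t adj C :=
  hS.trans (ncard_le_ncard_closedNbhd hSF hadj)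

end

theorem le_ncard_compl_of_ncard_le {n t : ℕ} (hn : 3 * t + 1 ≤ n) {B : Set (Fin n)}
    (hB : B.ncard ≤ t) : 2 * t + 1 ≤ Bᶜ.ncard := by
  have hsum := Set.ncard_add_ncard_compl B
  rw [Nat.card_fin] at hsum
  omega

theorem honest_in_F_and_E_general
    {n t : ℕ} (hn : 3 * t + 1 ≤ n)
    (B : Set (Fin n)) (hB : B.ncard ≤ t)
    (adj : Fin n → Fin n → Prop)
    (hclique : ∀ i ∉ B, ∀ j ∉ B, i ≠ j → adj i j)
    (C : Set (Fin n)) (hC : t + 1 ≤ (C \ B).ncard) :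
    (∀ i, i ∉ B → i ∈ Fset t adj C ∧ i ∈ Eset t adj C) ∧
      2 * t + 1 ≤ (Fset t adj C).ncard ∧
      2 * t + 1 ≤ (Eset t adj C).ncard ∧
      (Eset t adj C).Nonempty := by
  have hhonest : 2 * t + 1 ≤ Bᶜ.ncard := le_ncard_compl_of_ncard_le hn hB
  have hF : Bᶜ ⊆ Fset t adj C := fun i hi =>
    mem_Fset_of_subset Set.sdiff_subset hC fun k hk hki => hclique i hi k hk.2 (Ne.symm hki)
  have hE : Bᶜ ⊆ Eset t adj C := fun i hi =>
    mem_Eset_of_subset hF hhonest fun k hk hki => hclique i hi k hk (Ne.symm hki)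
  have hEcard : 2 * t + 1 ≤ (Eset t adj C).ncard := hhonest.trans (Set.ncard_le_ncard hE)
  exact ⟨fun i hi => ⟨hF hi, hE hi⟩, hhonest.trans (Set.ncard_le_ncard hF), hEcard,
    Set.nonempty_of_ncard_ne_zero (by omega)⟩

/-- If the honest parties (those outside the Byzantine set `B`, `|B| ≤ t`, with
`n ≥ 3t + 1`) form a clique in the agreement graph `adj` (symmetric and irreflexive), and
the set `C` contains at least `t + 1` honest parties, then every honest party belongs to
the derived sets `𝓕` and `𝓔`; in particular `|𝓕| ≥ 2t + 1` and `|𝓔| ≥ 2t + 1`, so `𝓔` is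
nonempty. -/
theorem honest_in_F_and_E
    {n t : ℕ} (hn : 3 * t + 1 ≤ n)
    (B : Set (Fin n)) (hB : B.ncard ≤ t)
    (adj : Fin n → Fin n → Prop)
    (hsymm : ∀ i j, adj i j → adj j i) (hirr : ∀ i, ¬ adj i i)
    (hclique : ∀ i ∉ B, ∀ j ∉ B, i ≠ j → adj i j)
    (C : Set (Fin n)) (hC : t + 1 ≤ (C \ B).ncard) :
    (∀ i, i ∉ B → i ∈ Fset t adj C ∧ i ∈ Eset t adj C) ∧
      2 * t + 1 ≤ (Fset t adj C).ncard ∧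
      2 * t + 1 ≤ (Eset t adj C).ncard ∧
      (Eset t adj C).Nonempty :=
  honest_in_F_and_E_general hn B hB adj hclique C hC
end
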